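/- Contiguous relation in n (equation (4.6)): For every integer n ≥ 0 and complex numbers q, a, b with q ≠ 0, a ≠ 0, b ≠ 0, such that all factors appearing in denominators below are nonzero, one has Σ_{k=0}^{n+1} (q^{-2n};q²)_k (a;q²)_k (b;q²)_k (q^{-1-2n}/(ab);q²)_k q^{2k} / ((q²;q²)_k (q^{-2n}/a;q²)_k (q^{-2n}/b;q²)_k (abq;q²)_k) = Σ_{k=0}^{n+1} (q^{-2n-2};q²)_k (a;q²)_k (b;q²)_k (q^{-1-2n}/(ab);q²)_k q^{2k} / ((q²;q²)_k (q^{-2n}/a;q²)_k (q^{-2n}/b;q²)_k (abq;q²)_k) + [q^{-2n}(1−a)(1−b)(1−q^{-1-2n}/(ab)) / ((1−q^{-2n}/a)(1−q^{-2n}/b)(1−abq))] · Σ_{k=0}^{n} (q^{-2n};q²)_k (aq²;q²)_k (bq²;q²)_k (q^{1-2n}/(ab);q²)_k q^{2k} / ((q²;q²)_k (q^{2-2n}/a;q²)_k (q^{2-2n}/b;q²)_k (abq³;q²)_k). -/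

import Mathlib

/-!
Put `X = q^{-2n}` and `p = q²`. The two `(n+2)`-term sums differ only in their first numerator
parameter, `X` against `X / p`. Since `(yp; p)_{k+1} - (y; p)_{k+1} = y (1 - p^{k+1}) (yp; p)_k`
and `1 - p^{k+1}` is the last factor of `(p; p)_{k+1}`, peeling the first factor off every other
q-factorial turns the difference of the `(k+1)`-st terms into the prefactor times the `k`-th term
of the series with every parameter but `X` multiplied by `p`.
-/

/-- The q-shifted factorial `(a; q)ₙ = ∏_{i=0}^{n-1} (1 - a qⁱ)`. -/
noncomputable def qPoch (a q : ℂ) (n : ℕ) : ℂ := ∏ i ∈ Finset.range n, (1 - a * q ^ i)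

theorem qPoch_zero (a q : ℂ) : qPoch a q 0 = 1 := Finset.prod_range_zero _

theorem qPoch_succ (a q : ℂ) (k : ℕ) : qPoch a q (k + 1) = qPoch a q k * (1 - a * q ^ k) :=
  Finset.prod_range_succ _ _

theorem qPoch_succ' (a q : ℂ) (k : ℕ) : qPoch a q (k + 1) = (1 - a) * qPoch (a * q) q k := by
  rw [qPoch, Finset.prod_range_succ', pow_zero, mul_one, mul_comm]
  exact congrArg _ (Finset.prod_congr rfl fun i _ => by rw [pow_succ', mul_assoc])

theorem qPoch_mul_succ (a q : ℂ) (k : ℕ) :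
    qPoch (a * q) q (k + 1) = qPoch a q (k + 1) + a * (1 - q * q ^ k) * qPoch (a * q) q k := by
  rw [qPoch_succ, qPoch_succ' a]
  ring

/-- The `k`-th term of the ₄φ₃ series with numerator parameters `x, a, b, c`, denominator
parameters `d, e, f`, base `p` and argument `p`. -/
noncomputable def phi43Term (x a b c d e f p : ℂ) (k : ℕ) : ℂ :=
  qPoch x p k * qPoch a p k * qPoch b p k * qPoch c p k * p ^ k /
    (qPoch p p k * qPoch d p k * qPoch e p k * qPoch f p k)

theorem phi43Term_mul_succ (y a b c d e f p : ℂ) (k : ℕ) (hp : qPoch p p (k + 1) ≠ 0)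
    (hd : qPoch d p (k + 1) ≠ 0) (he : qPoch e p (k + 1) ≠ 0) (hf : qPoch f p (k + 1) ≠ 0) :
    phi43Term (y * p) a b c d e f p (k + 1) =
      phi43Term y a b c d e f p (k + 1) +
        y * p * (1 - a) * (1 - b) * (1 - c) / ((1 - d) * (1 - e) * (1 - f)) *
          phi43Term (y * p) (a * p) (b * p) (c * p) (d * p) (e * p) (f * p) p k := by
  rw [qPoch_succ] at hp
  rw [qPoch_succ'] at hd he hf
  simp only [phi43Term, qPoch_mul_succ y, qPoch_succ p, qPoch_succ' a, qPoch_succ' b, qPoch_succ' c,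
    qPoch_succ' d, qPoch_succ' e, qPoch_succ' f, pow_succ']
  generalize qPoch y p (k + 1) = Y, qPoch (y * p) p k = X, qPoch (a * p) p k = A,
    qPoch (b * p) p k = B, qPoch (c * p) p k = C, qPoch (d * p) p k = D, qPoch (e * p) p k = E,
    qPoch (f * p) p k = F, qPoch p p k = P, p ^ k = t at *
  have hD : P * (1 - p * t) * ((1 - d) * D) * ((1 - e) * E) * ((1 - f) * F) ≠ 0 :=
    mul_ne_zero (mul_ne_zero (mul_ne_zero hp hd) he) hf
  have hD' : (1 - d) * (1 - e) * (1 - f) * (P * D * E * F) ≠ 0 := by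
    simp_all
  rw [add_mul, add_mul, add_mul, add_mul, add_div, div_mul_div_comm]
  congr 1
  rw [div_eq_div_iff hD hD']
  ring

theorem sum_range_phi43Term_mul (N : ℕ) (y a b c d e f p : ℂ)
    (hp : ∀ k ≤ N + 1, qPoch p p k ≠ 0) (hd : ∀ k ≤ N + 1, qPoch d p k ≠ 0)
    (he : ∀ k ≤ N + 1, qPoch e p k ≠ 0) (hf : ∀ k ≤ N + 1, qPoch f p k ≠ 0) :
    ∑ k ∈ Finset.range (N + 2), phi43Term (y * p) a b c d e f p k =
      ∑ k ∈ Finset.range (N + 2), phi43Term y a b c d e f p k +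
        y * p * (1 - a) * (1 - b) * (1 - c) / ((1 - d) * (1 - e) * (1 - f)) *
          ∑ k ∈ Finset.range (N + 1),
            phi43Term (y * p) (a * p) (b * p) (c * p) (d * p) (e * p) (f * p) p k := by
  rw [Finset.sum_range_succ', Finset.sum_range_succ' (phi43Term y a b c d e f p),
    Finset.sum_congr rfl fun k hk =>
      have hk : k + 1 ≤ N + 1 := Finset.mem_range.mp hk
      phi43Term_mul_succ y a b c d e f p k (hp _ hk) (hd _ hk) (he _ hk) (hf _ hk),
    Finset.sum_add_distrib, ← Finset.mul_sum]
  simp only [phi43Term, qPoch_zero]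
  ring

theorem andrews_contiguous_in_n_general (n : ℕ) (q a b : ℂ) (hq : q ≠ 0)
    (h1 : ∀ k ≤ n + 1, qPoch (q ^ 2) (q ^ 2) k ≠ 0)
    (h2 : ∀ k ≤ n + 1, qPoch (q ^ (-2 * (n : ℤ)) / a) (q ^ 2) k ≠ 0)
    (h3 : ∀ k ≤ n + 1, qPoch (q ^ (-2 * (n : ℤ)) / b) (q ^ 2) k ≠ 0)
    (h4 : ∀ k ≤ n + 1, qPoch (a * b * q) (q ^ 2) k ≠ 0) :
    ∑ k ∈ Finset.range (n + 2),
      qPoch (q ^ (-2 * (n : ℤ))) (q ^ 2) k * qPoch a (q ^ 2) k * qPoch b (q ^ 2) k *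
          qPoch (q ^ (-1 - 2 * (n : ℤ)) / (a * b)) (q ^ 2) k * q ^ (2 * k) /
        (qPoch (q ^ 2) (q ^ 2) k * qPoch (q ^ (-2 * (n : ℤ)) / a) (q ^ 2) k *
          qPoch (q ^ (-2 * (n : ℤ)) / b) (q ^ 2) k * qPoch (a * b * q) (q ^ 2) k) =
      (∑ k ∈ Finset.range (n + 2),
        qPoch (q ^ (-2 * (n : ℤ) - 2)) (q ^ 2) k * qPoch a (q ^ 2) k * qPoch b (q ^ 2) k *
            qPoch (q ^ (-1 - 2 * (n : ℤ)) / (a * b)) (q ^ 2) k * q ^ (2 * k) /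
          (qPoch (q ^ 2) (q ^ 2) k * qPoch (q ^ (-2 * (n : ℤ)) / a) (q ^ 2) k *
            qPoch (q ^ (-2 * (n : ℤ)) / b) (q ^ 2) k * qPoch (a * b * q) (q ^ 2) k)) +
      q ^ (-2 * (n : ℤ)) * (1 - a) * (1 - b) * (1 - q ^ (-1 - 2 * (n : ℤ)) / (a * b)) /
          ((1 - q ^ (-2 * (n : ℤ)) / a) * (1 - q ^ (-2 * (n : ℤ)) / b) * (1 - a * b * q)) *
        ∑ k ∈ Finset.range (n + 1),
          qPoch (q ^ (-2 * (n : ℤ))) (q ^ 2) k * qPoch (a * q ^ 2) (q ^ 2) k *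
              qPoch (b * q ^ 2) (q ^ 2) k * qPoch (q ^ (1 - 2 * (n : ℤ)) / (a * b)) (q ^ 2) k *
              q ^ (2 * k) /
            (qPoch (q ^ 2) (q ^ 2) k * qPoch (q ^ (2 - 2 * (n : ℤ)) / a) (q ^ 2) k *
              qPoch (q ^ (2 - 2 * (n : ℤ)) / b) (q ^ 2) k *
              qPoch (a * b * q ^ 3) (q ^ 2) k) := by
  have hpow (m : ℤ) : q ^ m * q ^ 2 = q ^ (m + 2) := by
    rw [zpow_add₀ hq]
    norm_cast
  have hx : q ^ (-2 * (n : ℤ) - 2) * q ^ 2 = q ^ (-2 * (n : ℤ)) := by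
    rw [hpow, sub_add_cancel]
  have hc : q ^ (-1 - 2 * (n : ℤ)) / (a * b) * q ^ 2 = q ^ (1 - 2 * (n : ℤ)) / (a * b) := by
    rw [div_mul_eq_mul_div, hpow]
    ring_nf
  have hd (z : ℂ) : q ^ (-2 * (n : ℤ)) / z * q ^ 2 = q ^ (2 - 2 * (n : ℤ)) / z := by
    rw [div_mul_eq_mul_div, hpow]
    ring_nf
  have key := sum_range_phi43Term_mul n (q ^ (-2 * (n : ℤ) - 2)) a b
    (q ^ (-1 - 2 * (n : ℤ)) / (a * b)) (q ^ (-2 * (n : ℤ)) / a)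
    (q ^ (-2 * (n : ℤ)) / b) (a * b * q) (q ^ 2) h1 h2 h3 h4
  rw [hx, hc, hd, hd, show a * b * q * q ^ 2 = a * b * q ^ 3 by ring] at key
  simpa only [phi43Term, ← pow_mul] using key

/-- The contiguous relation in `n`, equation (4.6) of the paper. -/
theorem andrews_contiguous_in_n (n : ℕ) (q a b : ℂ) (hq : q ≠ 0) (ha : a ≠ 0) (hb : b ≠ 0)
    (h1 : ∀ k ≤ n + 1, qPoch (q ^ 2) (q ^ 2) k ≠ 0)
    (h2 : ∀ k ≤ n + 1, qPoch (q ^ (-2 * (n : ℤ)) / a) (q ^ 2) k ≠ 0)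
    (h3 : ∀ k ≤ n + 1, qPoch (q ^ (-2 * (n : ℤ)) / b) (q ^ 2) k ≠ 0)
    (h4 : ∀ k ≤ n + 1, qPoch (a * b * q) (q ^ 2) k ≠ 0)
    (h5 : ∀ k ≤ n, qPoch (q ^ (2 - 2 * (n : ℤ)) / a) (q ^ 2) k ≠ 0)
    (h6 : ∀ k ≤ n, qPoch (q ^ (2 - 2 * (n : ℤ)) / b) (q ^ 2) k ≠ 0)
    (h7 : ∀ k ≤ n, qPoch (a * b * q ^ 3) (q ^ 2) k ≠ 0)
    (h8 : 1 - q ^ (-2 * (n : ℤ)) / a ≠ 0) (h9 : 1 - q ^ (-2 * (n : ℤ)) / b ≠ 0)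
    (h10 : 1 - a * b * q ≠ 0) :
    ∑ k ∈ Finset.range (n + 2),
      qPoch (q ^ (-2 * (n : ℤ))) (q ^ 2) k * qPoch a (q ^ 2) k * qPoch b (q ^ 2) k *
          qPoch (q ^ (-1 - 2 * (n : ℤ)) / (a * b)) (q ^ 2) k * q ^ (2 * k) /
        (qPoch (q ^ 2) (q ^ 2) k * qPoch (q ^ (-2 * (n : ℤ)) / a) (q ^ 2) k *
          qPoch (q ^ (-2 * (n : ℤ)) / b) (q ^ 2) k * qPoch (a * b * q) (q ^ 2) k) =
      (∑ k ∈ Finset.range (n + 2),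
        qPoch (q ^ (-2 * (n : ℤ) - 2)) (q ^ 2) k * qPoch a (q ^ 2) k * qPoch b (q ^ 2) k *
            qPoch (q ^ (-1 - 2 * (n : ℤ)) / (a * b)) (q ^ 2) k * q ^ (2 * k) /
          (qPoch (q ^ 2) (q ^ 2) k * qPoch (q ^ (-2 * (n : ℤ)) / a) (q ^ 2) k *
            qPoch (q ^ (-2 * (n : ℤ)) / b) (q ^ 2) k * qPoch (a * b * q) (q ^ 2) k)) +
      q ^ (-2 * (n : ℤ)) * (1 - a) * (1 - b) * (1 - q ^ (-1 - 2 * (n : ℤ)) / (a * b)) /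
          ((1 - q ^ (-2 * (n : ℤ)) / a) * (1 - q ^ (-2 * (n : ℤ)) / b) * (1 - a * b * q)) *
        ∑ k ∈ Finset.range (n + 1),
          qPoch (q ^ (-2 * (n : ℤ))) (q ^ 2) k * qPoch (a * q ^ 2) (q ^ 2) k *
              qPoch (b * q ^ 2) (q ^ 2) k * qPoch (q ^ (1 - 2 * (n : ℤ)) / (a * b)) (q ^ 2) k *
              q ^ (2 * k) /
            (qPoch (q ^ 2) (q ^ 2) k * qPoch (q ^ (2 - 2 * (n : ℤ)) / a) (q ^ 2) k *
              qPoch (q ^ (2 - 2 * (n : ℤ)) / b) (q ^ 2) k *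
              qPoch (a * b * q ^ 3) (q ^ 2) k) :=
  andrews_contiguous_in_n_general n q a b hq h1 h2 h3 h4
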